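/- arXiv:2106.09377 — 2 statements merged into one kernel-verified Lean document; each statement's English description precedes it below -/
import Mathlib

section
/- Let γ ∈ (0,1) and C ∈ [1, (1−γ)^{-1}). Suppose V̂ : X → ℝ_{≥0} satisfies the Bellman identity V̂(x) = L̂(x, π(x)) + γ V̂(f(x, π(x))) with L̂(x, π(x)) ≥ 0, and suppose V̂(x) ≤ C · L̂(x, π(x)) for all x in some set S. Then for all x ∈ S: V̂(f(x,π(x))) ≤ ((C−1)/(γC)) · V̂(x), and since C < (1−γ)^{-1} implies (C−1)/(γC) < 1, V̂ contracts along the closed loop on S: V̂(f(x,π(x))) ≤ κ V̂(x) with κ := (C−1)/(γC) ∈ [0,1). -/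
/-- Gaitsgory-type bound V̂ ≤ C·L̂ along the optimal policy together
with the Bellman identity give a geometric contraction of V̂ along the closed loop,
with factor κ = (C−1)/(γC) < 1 whenever C < (1−γ)⁻¹. -/
theorem gaitsgory_contraction
    {X U : Type*}
    (γ : ℝ) (hγ : γ ∈ Set.Ioo (0:ℝ) 1)
    (C : ℝ) (hC1 : 1 ≤ C) (hC2 : C < (1 - γ)⁻¹)
    (f : X → U → X) (Lhat : X → U → ℝ) (Vhat : X → ℝ) (π : X → U)
    (hVnonneg : ∀ x, 0 ≤ Vhat x)
    (hLnonneg : ∀ x, 0 ≤ Lhat x (π x))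
    (hBellman : ∀ x, Vhat x = Lhat x (π x) + γ * Vhat (f x (π x)))
    (S : Set X)
    (hbound : ∀ x ∈ S, Vhat x ≤ C * Lhat x (π x)) :
    (0 ≤ (C - 1) / (γ * C) ∧ (C - 1) / (γ * C) < 1) ∧
    ∀ x ∈ S, Vhat (f x (π x)) ≤ ((C - 1) / (γ * C)) * Vhat x := by
  obtain ⟨hγ0, hγ1⟩ := hγ
  have hC0 : 0 < C := lt_of_lt_of_le one_pos hC1
  have hγC : 0 < γ * C := mul_pos hγ0 hC0
  have h1γ : 0 < 1 - γ := by linarith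
  have hCkey : C * (1 - γ) < 1 := by
    have := mul_lt_mul_of_pos_right hC2 h1γ
    rwa [inv_mul_cancel₀ h1γ.ne'] at this
  have hκ1 : (C - 1) / (γ * C) < 1 := by
    rw [div_lt_one hγC]; nlinarith
  refine ⟨⟨div_nonneg (by linarith) hγC.le, hκ1⟩, ?_⟩
  intro x hx
  have hB := hBellman x
  have hb := hbound x hx
  have hL : Vhat x / C ≤ Lhat x (π x) := by
    rw [div_le_iff₀ hC0]; linarith [hb]
  have : γ * Vhat (f x (π x)) ≤ Vhat x - Vhat x / C := by linarith
  rw [div_mul_eq_mul_div, le_div_iff₀ hγC]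
  have h2 : Vhat x - Vhat x / C = (C - 1) / C * Vhat x := by
    field_simp
  nlinarith [this, hγ0, hC0]
end

section
/- Let A = [[2,0],[1,2]], B = I₂, Q = I₂, R = I₂, γ ∈ (0,1), and let P ≻ 0 solve the discounted discrete algebraic Riccati equation P = Q + γ A^T P A − γ² A^T P B (R + γ B^T P B)^{-1} B^T P A, with optimal feedback K = −γ (R + γ B^T P B)^{-1} B^T P A. Suppose there exists a symmetric matrix Λ such that (1) the quadratic form (x,u) ↦ x^T Q x + u^T R u + x^T Λ x − γ (Ax+Bu)^T Λ (Ax+Bu) is positive definite on ℝ² × ℝ², and (2) the quadratic form x ↦ x^T(Q + K^T R K)x + x^TΛx − x^T(A+BK)^TΛ(A+BK)x + (γ−1)x^T(A+BK)^T P (A+BK) x is positive definite. Then V̂(x) := x^T (P + Λ) x is a Lyapunov function for the closed loop x_+ = (A+BK)x: P + Λ ≻ 0 and V̂((A+BK)x) − V̂(x) ≤ −ρ(‖x‖) for some ρ ∈ 𝒦, hence x_k → 0 for every x₀. -/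
/-- A class-K function. -/
def ClassK (ρ : ℝ → ℝ) : Prop :=
  ContinuousOn ρ (Set.Ici 0) ∧ StrictMonoOn ρ (Set.Ici 0) ∧ ρ 0 = 0

open Matrix

private lemma aux_dot_self_nonneg (v : Fin 2 → ℝ) : 0 ≤ v ⬝ᵥ v := by
  simpa [star_trivial] using dotProduct_star_self_nonneg v

private lemma aux_dot_self_pos {v : Fin 2 → ℝ} (hv : v ≠ 0) : 0 < v ⬝ᵥ v := by
  have := Matrix.dotProduct_star_self_pos_iff (v := v)
  simpa [star_trivial] using this.mpr hv

private lemma aux_congr (M N : Matrix (Fin 2) (Fin 2) ℝ) (x : Fin 2 → ℝ) :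
    (M.mulVec x) ⬝ᵥ N.mulVec (M.mulVec x) = x ⬝ᵥ (Mᵀ * N * M).mulVec x := by
  rw [Matrix.mulVec_mulVec, Matrix.dotProduct_mulVec, Matrix.dotProduct_mulVec,
    Matrix.mul_assoc]
  conv_rhs => rw [← Matrix.vecMul_vecMul, Matrix.vecMul_transpose]

private lemma aux_congr1 (M : Matrix (Fin 2) (Fin 2) ℝ) (x : Fin 2 → ℝ) :
    (M.mulVec x) ⬝ᵥ (M.mulVec x) = x ⬝ᵥ (Mᵀ * M).mulVec x := by
  have := aux_congr M 1 x
  simpa [Matrix.one_mulVec, Matrix.mul_one] using this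

private lemma aux_hom (S : Matrix (Fin 2) (Fin 2) ℝ) (c : ℝ) (x : Fin 2 → ℝ) :
    (c • x) ⬝ᵥ S.mulVec (c • x) = c ^ 2 * (x ⬝ᵥ S.mulVec x) := by
  rw [Matrix.mulVec_smul, smul_dotProduct, dotProduct_smul]
  simp [smul_eq_mul]; ring

private lemma aux_cont (S : Matrix (Fin 2) (Fin 2) ℝ) :
    Continuous (fun x : Fin 2 → ℝ => x ⬝ᵥ S.mulVec x) := by
  have h : (fun x : Fin 2 → ℝ => x ⬝ᵥ S.mulVec x)
      = fun x => ∑ i, x i * ∑ j, S i j * x j := by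
    funext x; simp [dotProduct, Matrix.mulVec]
  rw [h]
  exact continuous_finset_sum _ fun i _ => (continuous_apply i).mul
    (continuous_finset_sum _ fun j _ => continuous_const.mul (continuous_apply j))

private lemma aux_sphere_min (S : Matrix (Fin 2) (Fin 2) ℝ) :
    ∃ y : Fin 2 → ℝ, ‖y‖ = 1 ∧ ∀ x, (y ⬝ᵥ S.mulVec y) * ‖x‖ ^ 2 ≤ x ⬝ᵥ S.mulVec x := by
  have hne : (Metric.sphere (0 : Fin 2 → ℝ) 1).Nonempty :=
    NormedSpace.sphere_nonempty.mpr zero_le_one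
  obtain ⟨y, hy, hmin⟩ := (isCompact_sphere (0 : Fin 2 → ℝ) 1).exists_isMinOn hne
    (aux_cont S).continuousOn
  refine ⟨y, mem_sphere_zero_iff_norm.mp hy, fun x => ?_⟩
  by_cases hx : x = 0
  · subst hx; simp
  · have hxn : ‖x‖ ≠ 0 := norm_ne_zero_iff.mpr hx
    have h1 : ‖(‖x‖⁻¹ • x)‖ = 1 := by
      rw [norm_smul, norm_inv, norm_norm, inv_mul_cancel₀ hxn]
    have h2 : y ⬝ᵥ S.mulVec y ≤ (‖x‖⁻¹ • x) ⬝ᵥ S.mulVec (‖x‖⁻¹ • x) :=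
      hmin (mem_sphere_zero_iff_norm.mpr h1)
    rw [aux_hom] at h2
    have h3 : ((‖x‖⁻¹) ^ 2) * (‖x‖ ^ 2) = 1 := by field_simp
    have h4 : 0 < ‖x‖ ^ 2 := by positivity
    calc (y ⬝ᵥ S.mulVec y) * ‖x‖ ^ 2
        ≤ (‖x‖⁻¹ ^ 2 * (x ⬝ᵥ S.mulVec x)) * ‖x‖ ^ 2 :=
          mul_le_mul_of_nonneg_right h2 h4.le
      _ = (x ⬝ᵥ S.mulVec x) * (‖x‖⁻¹ ^ 2 * ‖x‖ ^ 2) := by ring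
      _ = x ⬝ᵥ S.mulVec x := by rw [h3, mul_one]

private lemma aux_min (S : Matrix (Fin 2) (Fin 2) ℝ)
    (h : ∀ x : Fin 2 → ℝ, x ≠ 0 → 0 < x ⬝ᵥ S.mulVec x) :
    ∃ c : ℝ, 0 < c ∧ ∀ x, c * ‖x‖ ^ 2 ≤ x ⬝ᵥ S.mulVec x := by
  obtain ⟨y, hy, hle⟩ := aux_sphere_min S
  have hy0 : y ≠ 0 := fun h0 => by simp [h0] at hy
  exact ⟨y ⬝ᵥ S.mulVec y, h y hy0, hle⟩

private lemma aux_normsq_le_dot (x : Fin 2 → ℝ) : ‖x‖ ^ 2 ≤ x ⬝ᵥ x := by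
  have hd : x ⬝ᵥ x = x 0 ^ 2 + x 1 ^ 2 := by
    simp [dotProduct, Fin.sum_univ_two]; ring
  have h : ‖x‖ ≤ Real.sqrt (x ⬝ᵥ x) := by
    refine (pi_norm_le_iff_of_nonneg (Real.sqrt_nonneg _)).mpr fun i => ?_
    have h1 : ‖x i‖ = Real.sqrt ((x i) ^ 2) := by
      rw [Real.sqrt_sq_eq_abs, Real.norm_eq_abs]
    rw [h1]
    apply Real.sqrt_le_sqrt
    fin_cases i <;> simp [hd] <;> nlinarith [sq_nonneg (x 0), sq_nonneg (x 1)]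
  calc ‖x‖ ^ 2 ≤ (Real.sqrt (x ⬝ᵥ x)) ^ 2 := by
        apply pow_le_pow_left₀ (norm_nonneg _) h
    _ = x ⬝ᵥ x := Real.sq_sqrt (aux_dot_self_nonneg x)

private lemma aux_le_of_sq {q C κ n d : ℝ} (h : q ≤ C * n) (hC : C ≤ κ) (hκ : 0 < κ)
    (hn : 0 ≤ n) (hnd : n ≤ d) (hd : 0 ≤ d) : q ≤ κ * d := by
  rcases le_or_gt C 0 with hc | hc
  · nlinarith
  · nlinarith

private lemma aux_bound (S : Matrix (Fin 2) (Fin 2) ℝ) :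
    ∃ κ : ℝ, 0 < κ ∧ ∀ x, |x ⬝ᵥ S.mulVec x| ≤ κ * (x ⬝ᵥ x) := by
  obtain ⟨y0, _, h0⟩ := aux_sphere_min S
  obtain ⟨y1, _, h1⟩ := aux_sphere_min (-S)
  set a := y0 ⬝ᵥ S.mulVec y0 with ha
  set b := y1 ⬝ᵥ (-S).mulVec y1 with hb
  refine ⟨max |a| |b| + 1, by positivity, fun x => ?_⟩
  have h0x := h0 x
  have h1x := h1 x
  rw [Matrix.neg_mulVec, dotProduct_neg] at h1x
  have hn := aux_normsq_le_dot x
  have hnn : (0:ℝ) ≤ ‖x‖ ^ 2 := by positivity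
  have hκ : (0:ℝ) < max |a| |b| + 1 := by positivity
  have hdd := aux_dot_self_nonneg x
  rw [abs_le]
  constructor
  · have : -(x ⬝ᵥ S.mulVec x) ≤ (max |a| |b| + 1) * (x ⬝ᵥ x) := by
      refine aux_le_of_sq (C := -a) (by linarith) ?_ hκ hnn hn hdd
      have := le_max_left |a| |b|
      have := neg_abs_le a
      linarith
    linarith
  · refine aux_le_of_sq (C := -b) (by linarith) ?_ hκ hnn hn hdd
    have := le_max_right |a| |b|
    have := neg_abs_le b
    linarith


set_option maxHeartbeats 1000000 in
/-- LQR instance of strong discounted strict dissipativity.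
With A = [[2,0],[1,2]], B = Q = R = I, discounted Riccati solution P ≻ 0,
optimal gain K, and a symmetric Λ making both SDSD quadratic forms positive
definite, V̂(x) = xᵀ(P+Λ)x is a Lyapunov function for x₊ = (A+BK)x and every
closed-loop trajectory converges to 0. -/
theorem lqr_sdsd_lyapunov
    (γ : ℝ) (hγ : γ ∈ Set.Ioo (0:ℝ) 1)
    (A B Q R : Matrix (Fin 2) (Fin 2) ℝ)
    (hA : A = !![2, 0; 1, 2]) (hB : B = 1) (hQ : Q = 1) (hR : R = 1)
    (P : Matrix (Fin 2) (Fin 2) ℝ) (hPpos : P.PosDef)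
    (hRiccati : P = Q + γ • (Aᵀ * P * A)
      - (γ ^ 2) • (Aᵀ * P * B * (R + γ • (Bᵀ * P * B))⁻¹ * (Bᵀ * P * A)))
    (K : Matrix (Fin 2) (Fin 2) ℝ)
    (hK : K = -(γ • ((R + γ • (Bᵀ * P * B))⁻¹ * (Bᵀ * P * A))))
    (Λ : Matrix (Fin 2) (Fin 2) ℝ) (hΛsym : Λ.IsSymm)
    -- (1) SDSD condition (i): the modified stage cost is positive definite in (x,u)
    (h1 : ∀ x u : Fin 2 → ℝ, (x, u) ≠ 0 →
      0 < x ⬝ᵥ Q.mulVec x + u ⬝ᵥ R.mulVec u + x ⬝ᵥ Λ.mulVec x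
          - γ * ((A.mulVec x + B.mulVec u) ⬝ᵥ Λ.mulVec (A.mulVec x + B.mulVec u)))
    -- (2) SDSD condition (ii) along u = Kx is positive definite in x
    (h2 : ∀ x : Fin 2 → ℝ, x ≠ 0 →
      0 < x ⬝ᵥ (Q + Kᵀ * R * K).mulVec x + x ⬝ᵥ Λ.mulVec x
          - ((A + B * K).mulVec x) ⬝ᵥ Λ.mulVec ((A + B * K).mulVec x)
          + (γ - 1) * (((A + B * K).mulVec x) ⬝ᵥ P.mulVec ((A + B * K).mulVec x))) :
    (Matrix.PosDef (P + Λ)) ∧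
    (∃ ρ : ℝ → ℝ, ClassK ρ ∧
      ∀ x : Fin 2 → ℝ,
        ((A + B * K).mulVec x) ⬝ᵥ (P + Λ).mulVec ((A + B * K).mulVec x)
          - x ⬝ᵥ (P + Λ).mulVec x ≤ - ρ ‖x‖) ∧
    (∀ (x0 : Fin 2 → ℝ) (traj : ℕ → Fin 2 → ℝ),
      traj 0 = x0 → (∀ k, traj (k + 1) = (A + B * K).mulVec (traj k)) →
      Filter.Tendsto traj Filter.atTop (nhds 0)) := by
  obtain ⟨hγ0, hγ1⟩ := hγ
  subst hB hQ hR
  simp only [Matrix.one_mul, Matrix.mul_one, Matrix.one_mulVec, Matrix.transpose_one] at h1 h2 hRiccati hK ⊢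
  -- symmetry facts
  have hPt : Pᵀ = P := by
    have h := hPpos.1
    rwa [Matrix.IsHermitian, Matrix.conjTranspose_eq_transpose_of_trivial] at h
  have hΛt : Λᵀ = Λ := hΛsym
  -- the matrix M = 1 + γ • P and its inverse N
  have hMpd : (1 + γ • P).PosDef := by
    refine Matrix.PosDef.of_dotProduct_mulVec_pos ?_ ?_
    · show (1 + γ • P)ᴴ = 1 + γ • P
      rw [Matrix.conjTranspose_eq_transpose_of_trivial, Matrix.transpose_add,
        Matrix.transpose_one, Matrix.transpose_smul, hPt]
    · intro x hx
      have hx1 : 0 < x ⬝ᵥ x := aux_dot_self_pos hx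
      have hx2 : 0 < x ⬝ᵥ P.mulVec x := by simpa [star_trivial] using hPpos.dotProduct_mulVec_pos hx
      simp only [star_trivial, Matrix.add_mulVec, Matrix.one_mulVec,
        Matrix.smul_mulVec, dotProduct_add, dotProduct_smul, smul_eq_mul]
      nlinarith
  have hdet : IsUnit (1 + γ • P).det := isUnit_iff_ne_zero.mpr hMpd.det_pos.ne'
  set N : Matrix (Fin 2) (Fin 2) ℝ := (1 + γ • P)⁻¹ with hNdef
  have hNM : N * (1 + γ • P) = 1 := Matrix.nonsing_inv_mul _ hdet
  have hMN : (1 + γ • P) * N = 1 := Matrix.mul_nonsing_inv _ hdet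
  have hMt : (1 + γ • P)ᵀ = 1 + γ • P := by
    rw [Matrix.transpose_add, Matrix.transpose_one, Matrix.transpose_smul, hPt]
  have hNt : Nᵀ = N := by
    rw [hNdef, Matrix.transpose_nonsing_inv, hMt]
  have f1 : γ • (N * P) = 1 - N := by
    have h := hNM
    rw [mul_add, mul_one, Matrix.mul_smul] at h
    exact eq_sub_of_add_eq' h
  have f2 : γ • (P * N) = 1 - N := by
    have h := hMN
    rw [add_mul, one_mul, Matrix.smul_mul] at h
    exact eq_sub_of_add_eq' h
  -- closed-loop matrix
  have hAcl : A + K = N * A := by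
    rw [hK]
    have e : γ • (N * (P * A)) = (γ • (N * P)) * A := by
      rw [Matrix.smul_mul, Matrix.mul_assoc]
    rw [e, f1]
    noncomm_ring
  have hAclT : (A + K)ᵀ = Aᵀ * N := by rw [hAcl, Matrix.transpose_mul, hNt]
  have hKe : K = N * A - A := by
    have := hAcl
    exact eq_sub_of_add_eq' this
  have hKt : Kᵀ = Aᵀ * N - Aᵀ := by
    rw [hKe, Matrix.transpose_sub, Matrix.transpose_mul, hNt]
  -- Riccati in clean form
  have hRic' : P = 1 + Aᵀ * ((1 - N) * A) := by
    have e1 : (γ:ℝ)^2 • (Aᵀ * P * N * (P * A)) = γ • (Aᵀ * ((1 - N) * (P * A))) := by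
      rw [← f2, sq, ← smul_smul]
      congr 1
      rw [Matrix.smul_mul, Matrix.mul_smul]
      congr 1
      noncomm_ring
    rw [hRiccati, e1, add_sub_assoc, ← smul_sub]
    have e2 : Aᵀ * P * A - Aᵀ * ((1 - N) * (P * A)) = Aᵀ * ((N * P) * A) := by
      noncomm_ring
    rw [e2]
    have e3 : (γ:ℝ) • (Aᵀ * ((N * P) * A)) = Aᵀ * ((γ • (N * P)) * A) := by
      rw [Matrix.smul_mul, Matrix.mul_smul]
    rw [e3, f1]
  -- Bellman identity
  have hBell : (1 : Matrix (Fin 2) (Fin 2) ℝ) + Kᵀ * K + γ • ((A + K)ᵀ * P * (A + K)) = P := by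
    have e : γ • ((A + K)ᵀ * P * (A + K)) = Aᵀ * ((γ • (N * P)) * (N * A)) := by
      rw [hAclT, hAcl, Matrix.smul_mul, Matrix.mul_smul]
      congr 1
      noncomm_ring
    rw [e, f1, hKt, hKe]
    conv_rhs => rw [hRic']
    noncomm_ring
  -- the matrices S and T
  set S : Matrix (Fin 2) (Fin 2) ℝ :=
    1 + Kᵀ * K + Λ - (A + K)ᵀ * Λ * (A + K) + (γ - 1) • ((A + K)ᵀ * P * (A + K)) with hSdef
  set T : Matrix (Fin 2) (Fin 2) ℝ :=
    1 + Kᵀ * K + Λ - γ • ((A + K)ᵀ * Λ * (A + K)) with hTdef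
  have hSq : ∀ x : Fin 2 → ℝ, x ⬝ᵥ S.mulVec x
      = x ⬝ᵥ (1 + Kᵀ * K).mulVec x + x ⬝ᵥ Λ.mulVec x
        - ((A + K).mulVec x) ⬝ᵥ Λ.mulVec ((A + K).mulVec x)
        + (γ - 1) * (((A + K).mulVec x) ⬝ᵥ P.mulVec ((A + K).mulVec x)) := by
    intro x
    rw [aux_congr (A + K) Λ x, aux_congr (A + K) P x, hSdef]
    simp only [Matrix.add_mulVec, Matrix.sub_mulVec, Matrix.smul_mulVec,
      dotProduct_add, dotProduct_sub, dotProduct_smul, smul_eq_mul]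
    try ring
  have hSpos : ∀ x : Fin 2 → ℝ, x ≠ 0 → 0 < x ⬝ᵥ S.mulVec x := by
    intro x hx; rw [hSq x]; exact h2 x hx
  have hTq : ∀ x : Fin 2 → ℝ, x ⬝ᵥ T.mulVec x
      = x ⬝ᵥ x + (K.mulVec x) ⬝ᵥ (K.mulVec x) + x ⬝ᵥ Λ.mulVec x
        - γ * (((A + K).mulVec x) ⬝ᵥ Λ.mulVec ((A + K).mulVec x)) := by
    intro x
    rw [aux_congr (A + K) Λ x, aux_congr1 K x, hTdef]
    simp only [Matrix.add_mulVec, Matrix.sub_mulVec, Matrix.one_mulVec,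
      Matrix.smul_mulVec, dotProduct_add, dotProduct_sub, dotProduct_smul, smul_eq_mul]
    try ring
  have hTpos : ∀ x : Fin 2 → ℝ, x ≠ 0 → 0 < x ⬝ᵥ T.mulVec x := by
    intro x hx
    have hxu : ((x, K.mulVec x) : (Fin 2 → ℝ) × (Fin 2 → ℝ)) ≠ 0 := by
      intro h
      exact hx (by simpa using congrArg Prod.fst h)
    have h := h1 x (K.mulVec x) hxu
    rw [hTq x, Matrix.add_mulVec]
    exact h
  -- key Lyapunov matrix identities
  have hγP : γ • ((A + K)ᵀ * P * (A + K)) = P - (1 + Kᵀ * K) :=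
    eq_sub_of_add_eq' hBell
  have hsplit : (A + K)ᵀ * (P + Λ) * (A + K)
      = (A + K)ᵀ * P * (A + K) + (A + K)ᵀ * Λ * (A + K) := by noncomm_ring
  have I1 : P + Λ - (A + K)ᵀ * (P + Λ) * (A + K) = S := by
    rw [hSdef, sub_smul, one_smul, hγP, hsplit]; abel
  have I2 : P + Λ - γ • ((A + K)ᵀ * (P + Λ) * (A + K)) = T := by
    rw [hTdef, hsplit, smul_add, hγP]; abel
  have hWdiff : ∀ y : Fin 2 → ℝ,
      ((A + K).mulVec y) ⬝ᵥ (P + Λ).mulVec ((A + K).mulVec y) - y ⬝ᵥ (P + Λ).mulVec y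
        = -(y ⬝ᵥ S.mulVec y) := by
    intro y
    rw [aux_congr (A + K) (P + Λ) y, ← I1, Matrix.sub_mulVec, dotProduct_sub]
    try ring
  have hWT : ∀ y : Fin 2 → ℝ,
      y ⬝ᵥ (P + Λ).mulVec y
        - γ * (((A + K).mulVec y) ⬝ᵥ (P + Λ).mulVec ((A + K).mulVec y))
        = y ⬝ᵥ T.mulVec y := by
    intro y
    rw [aux_congr (A + K) (P + Λ) y, ← I2, Matrix.sub_mulVec, dotProduct_sub,
      Matrix.smul_mulVec, dotProduct_smul, smul_eq_mul]
  obtain ⟨cS, hcS, hSle⟩ := aux_min _ hSpos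
  obtain ⟨cT, hcT, hTle⟩ := aux_min _ hTpos
  obtain ⟨κ, hκ, hκle⟩ := aux_bound (P + Λ)
  -- Bellman, quadratic form version
  have hBq : ∀ v : Fin 2 → ℝ, v ⬝ᵥ P.mulVec v
      = v ⬝ᵥ v + (K.mulVec v) ⬝ᵥ (K.mulVec v)
        + γ * (((A + K).mulVec v) ⬝ᵥ P.mulVec ((A + K).mulVec v)) := by
    intro v
    conv_lhs => rw [← hBell]
    rw [aux_congr1 K v, aux_congr (A + K) P v]
    simp only [Matrix.add_mulVec, Matrix.one_mulVec, Matrix.smul_mulVec,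
      dotProduct_add, dotProduct_smul, smul_eq_mul]
    try ring
  -- nonnegativity of the candidate Lyapunov function
  have hWnonneg : ∀ y : Fin 2 → ℝ, 0 ≤ y ⬝ᵥ (P + Λ).mulVec y := by
    intro y
    set z : ℕ → Fin 2 → ℝ := fun k => ((A + K) ^ k).mulVec y with hz
    have hz0 : z 0 = y := by simp only [hz, pow_zero, Matrix.one_mulVec]
    have hzs : ∀ k, z (k + 1) = (A + K).mulVec (z k) := by
      intro k
      simp only [hz]
      rw [pow_succ', ← Matrix.mulVec_mulVec]
    have hu0 : ∀ k, 0 ≤ γ ^ k * (z k ⬝ᵥ z k) :=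
      fun k => mul_nonneg (pow_nonneg hγ0.le k) (aux_dot_self_nonneg _)
    have hgnn : ∀ k, 0 ≤ γ ^ k * (z k ⬝ᵥ P.mulVec (z k)) := fun k =>
      mul_nonneg (pow_nonneg hγ0.le k)
        (by simpa [star_trivial] using hPpos.posSemidef.dotProduct_mulVec_nonneg (z k))
    have hstep : ∀ k, γ ^ k * (z k ⬝ᵥ z k)
        ≤ γ ^ k * (z k ⬝ᵥ P.mulVec (z k)) - γ ^ (k + 1) * (z (k + 1) ⬝ᵥ P.mulVec (z (k + 1))) := by
      intro k
      have hkk : 0 ≤ (K.mulVec (z k)) ⬝ᵥ (K.mulVec (z k)) := aux_dot_self_nonneg _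
      have hp : (0:ℝ) ≤ γ ^ k := pow_nonneg hγ0.le k
      rw [hzs k, pow_succ, hBq (z k)]
      nlinarith [mul_nonneg hp hkk]
    have hsum : ∀ n, ∑ k ∈ Finset.range n, γ ^ k * (z k ⬝ᵥ z k)
        ≤ γ ^ 0 * (z 0 ⬝ᵥ P.mulVec (z 0)) := by
      intro n
      calc ∑ k ∈ Finset.range n, γ ^ k * (z k ⬝ᵥ z k)
          ≤ ∑ k ∈ Finset.range n, (γ ^ k * (z k ⬝ᵥ P.mulVec (z k))
              - γ ^ (k + 1) * (z (k + 1) ⬝ᵥ P.mulVec (z (k + 1)))) :=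
            Finset.sum_le_sum fun k _ => hstep k
        _ = γ ^ 0 * (z 0 ⬝ᵥ P.mulVec (z 0)) - γ ^ n * (z n ⬝ᵥ P.mulVec (z n)) :=
            Finset.sum_range_sub' (fun k => γ ^ k * (z k ⬝ᵥ P.mulVec (z k))) n
        _ ≤ γ ^ 0 * (z 0 ⬝ᵥ P.mulVec (z 0)) := by linarith [hgnn n]
    have hu := (summable_of_sum_range_le hu0 hsum).tendsto_atTop_zero
    have hWz : Filter.Tendsto (fun k => γ ^ k * (z k ⬝ᵥ (P + Λ).mulVec (z k)))
        Filter.atTop (nhds 0) := by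
      have hb : ∀ k, ‖γ ^ k * (z k ⬝ᵥ (P + Λ).mulVec (z k))‖
          ≤ κ * (γ ^ k * (z k ⬝ᵥ z k)) := by
        intro k
        have h1' := hκle (z k)
        have hp : (0:ℝ) ≤ γ ^ k := pow_nonneg hγ0.le k
        rw [Real.norm_eq_abs, abs_mul, abs_of_nonneg hp]
        calc γ ^ k * |z k ⬝ᵥ (P + Λ).mulVec (z k)| ≤ γ ^ k * (κ * (z k ⬝ᵥ z k)) :=
              mul_le_mul_of_nonneg_left h1' hp
          _ = κ * (γ ^ k * (z k ⬝ᵥ z k)) := by ring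
      exact squeeze_zero_norm hb (by simpa using hu.const_mul κ)
    have hclaim : ∀ k, γ ^ k * (z k ⬝ᵥ (P + Λ).mulVec (z k)) ≤ y ⬝ᵥ (P + Λ).mulVec y := by
      intro k
      induction k with
      | zero => simp [hz0]
      | succ k ih =>
        have h' := hWT (z k)
        rw [← hzs k] at h'
        have hT0 : 0 ≤ z k ⬝ᵥ T.mulVec (z k) :=
          le_trans (by positivity) (hTle (z k))
        have hp : (0:ℝ) ≤ γ ^ k := pow_nonneg hγ0.le k
        have hmul : 0 ≤ γ ^ k * (z k ⬝ᵥ (P + Λ).mulVec (z k)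
            - γ * (z (k + 1) ⬝ᵥ (P + Λ).mulVec (z (k + 1)))) := mul_nonneg hp (by linarith)
        rw [pow_succ]
        nlinarith [hmul, ih]
    exact le_of_tendsto hWz (Filter.Eventually.of_forall hclaim)
  -- first conclusion: positive definiteness
  have hPDpos : (P + Λ).PosDef := by
    refine Matrix.PosDef.of_dotProduct_mulVec_pos ?_ ?_
    · show (P + Λ)ᴴ = P + Λ
      rw [Matrix.conjTranspose_eq_transpose_of_trivial, Matrix.transpose_add, hPt, hΛt]
    · intro x hx
      have hWTx := hWT x
      have hTx := hTle x
      have hn : (0:ℝ) < ‖x‖ := norm_pos_iff.mpr hx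
      have h0 : 0 ≤ ((A + K).mulVec x) ⬝ᵥ (P + Λ).mulVec ((A + K).mulVec x) := hWnonneg _
      have hcT2 : 0 < cT * ‖x‖ ^ 2 := by positivity
      simp only [star_trivial]
      nlinarith [mul_nonneg hγ0.le h0]
  refine ⟨hPDpos, ⟨fun t => cS * t ^ 2, ⟨?_, ?_, ?_⟩, ?_⟩, ?_⟩
  · exact (continuous_const.mul (continuous_pow 2)).continuousOn
  · intro a ha b hb hab
    simp only
    have : a ^ 2 < b ^ 2 := by nlinarith [Set.mem_Ici.mp ha]
    nlinarith
  · simp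
  · intro x
    have hd := hWdiff x
    have hs := hSle x
    simp only
    linarith
  · intro x0 traj h0 hrec
    have hdec : ∀ k, traj (k + 1) ⬝ᵥ (P + Λ).mulVec (traj (k + 1))
        = traj k ⬝ᵥ (P + Λ).mulVec (traj k) - traj k ⬝ᵥ S.mulVec (traj k) := by
      intro k
      have h' := hWdiff (traj k)
      rw [← hrec k] at h'
      linarith
    set w : ℕ → ℝ := fun k => traj k ⬝ᵥ (P + Λ).mulVec (traj k) with hw
    have hwa : Antitone w := antitone_nat_of_succ_le fun n => by
      have hS0 : 0 ≤ traj n ⬝ᵥ S.mulVec (traj n) :=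
        le_trans (by positivity) (hSle (traj n))
      have := hdec n
      simp only [hw]
      linarith
    have hbdd : BddBelow (Set.range w) := ⟨0, by rintro v ⟨k, rfl⟩; exact hWnonneg _⟩
    have hL := tendsto_atTop_ciInf hwa hbdd
    have hL2 : Filter.Tendsto (fun k => w (k + 1)) Filter.atTop (nhds (⨅ i, w i)) :=
      hL.comp (Filter.tendsto_add_atTop_nat 1)
    have hdiff : Filter.Tendsto (fun k => w k - w (k + 1)) Filter.atTop (nhds 0) := by
      have := hL.sub hL2
      simpa using this
    have hns : Filter.Tendsto (fun k => ‖traj k‖ ^ 2) Filter.atTop (nhds 0) := by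
      apply squeeze_zero (fun k => by positivity) (g := fun k => (w k - w (k + 1)) / cS)
      · intro k
        rw [le_div_iff₀ hcS]
        have := hSle (traj k)
        have hd := hdec k
        simp only [hw]
        nlinarith
      · simpa using hdiff.div_const cS
    have h := (Real.continuous_sqrt.tendsto 0).comp hns
    rw [Real.sqrt_zero] at h
    exact tendsto_zero_iff_norm_tendsto_zero.mpr
      (h.congr fun k => Real.sqrt_sq (norm_nonneg _))
end
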